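/- Let R be an alternative ring whose additive group has no 2-torsion (2*x = 0 implies x = 0). If x, y, z in R pairwise commute (x*y = y*x, x*z = z*x, y*z = z*y), then x*y commutes with z, i.e. (x*y)*z = z*(x*y). -/

import Mathlib

/-!
Linearizing the two alternative laws shows that the associator `(a, b, c)` changes sign under
each transposition of its arguments. In any ring one has the identity
`[xy, z] = x[y, z] + [x, z]y + (x, y, z) - (x, z, y) + (z, x, y)`, so when `z` commutes with `x`
and `y` it gives `[xy, z] = 3 (x, y, z)`. Exchanging `x` and `y` gives `[yx, z] = -3 (x, y, z)`,
and since `xy = yx` these add up to `2 [xy, z] = 0`.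
-/

section NonUnitalNonAssocRing

variable {R : Type*} [NonUnitalNonAssocRing R]

theorem mul_lie_eq_add_associator (x y z : R) :
    ⁅x * y, z⁆ = x * ⁅y, z⁆ + ⁅x, z⁆ * y +
      (associator x y z - associator x z y + associator z x y) := by
  simp only [Ring.lie_def, associator_apply, mul_sub, sub_mul]
  abel

theorem associator_swap_left (hl : ∀ x y : R, (x * x) * y = x * (x * y)) (x y z : R) :
    associator y x z = -associator x y z := by
  have h := hl (x + y) z
  simp only [add_mul, mul_add] at h
  simp only [associator_apply]
  linear_combination (norm := abel1) h - hl x z - hl y z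

theorem associator_swap_right (hr : ∀ x y : R, (y * x) * x = y * (x * x)) (x y z : R) :
    associator x z y = -associator x y z := by
  have h := hr (y + z) x
  simp only [add_mul, mul_add] at h
  simp only [associator_apply]
  linear_combination (norm := abel1) h - hr y x - hr z x

theorem lie_mul_eq_three_nsmul_associator (hl : ∀ x y : R, (x * x) * y = x * (x * y))
    (hr : ∀ x y : R, (y * x) * x = y * (x * x)) {x y z : R} (hxz : Commute x z)
    (hyz : Commute y z) :
    ⁅x * y, z⁆ = 3 • associator x y z := by
  have hcycle : associator z x y = associator x y z := by
    rw [associator_swap_left hl, associator_swap_right hr, neg_neg]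
  rw [mul_lie_eq_add_associator, commute_iff_lie_eq.mp hxz, commute_iff_lie_eq.mp hyz,
    associator_swap_right hr x y z, hcycle]
  simp only [mul_zero, zero_mul, zero_add]
  abel

theorem two_nsmul_lie_mul_eq_zero (hl : ∀ x y : R, (x * x) * y = x * (x * y))
    (hr : ∀ x y : R, (y * x) * x = y * (x * x)) {x y z : R} (hxy : Commute x y)
    (hxz : Commute x z) (hyz : Commute y z) :
    2 • ⁅x * y, z⁆ = 0 := by
  calc 2 • ⁅x * y, z⁆ = ⁅x * y, z⁆ + ⁅y * x, z⁆ := by rw [two_nsmul, hxy.eq]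
    _ = 3 • associator x y z + 3 • associator y x z := by
      rw [lie_mul_eq_three_nsmul_associator hl hr hxz hyz,
        lie_mul_eq_three_nsmul_associator hl hr hyz hxz]
    _ = 0 := by rw [associator_swap_left hl x y z, smul_neg, add_neg_cancel]

end NonUnitalNonAssocRing

theorem stmt_11 {R : Type*} [NonUnitalNonAssocRing R]
    (hl : ∀ x y : R, (x*x)*y = x*(x*y))
    (hr : ∀ x y : R, (y*x)*x = y*(x*x))
    (h2 : ∀ x : R, (2 : ℕ) • x = 0 → x = 0)
    (x y z : R) (hxy : x*y = y*x) (hxz : x*z = z*x) (hyz : y*z = z*y) :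
    (x*y)*z = z*(x*y) := by
  have h := h2 _ (two_nsmul_lie_mul_eq_zero hl hr hxy hxz hyz)
  rwa [Ring.lie_def, sub_eq_zero] at h
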